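/- (q-Kummer polynomial Lebesgue analogue) For every nonnegative integer L, ∑_{j=0}^{L} [L choose j]_q q^{T_j} (z^2 q; q)_j (z^2 q^{2+L+j}; q)_{L-j} = (-q;q)_L (z^2 q^2; q^2)_L, where T_j = j(j+1)/2. -/
import Mathlib


/-- The q-Pochhammer symbol `(a;q)_n = ∏_{m=0}^{n-1} (1 - a q^m)`. -/
noncomputable def qPoch {K : Type*} [Field K] (a q : K) (n : ℕ) : K :=
  ∏ m ∈ Finset.range n, (1 - a * q ^ m)

/-- The Gaussian binomial coefficient `[m choose n]_q`, interpreted as `0`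
when `n < 0` or `m < n`. -/
noncomputable def qbinom {K : Type*} [Field K] (q : K) (m n : ℤ) : K :=
  if 0 ≤ n ∧ n ≤ m then
    qPoch q q m.toNat / (qPoch q q n.toNat * qPoch q q (m - n).toNat)
  else 0

/-- Triangular numbers `T n = n(n+1)/2`. -/
def T (n : ℕ) : ℕ := n * (n + 1) / 2

section Aux
variable {K : Type*} [Field K]

lemma qPoch_succ (a q : K) (n : ℕ) :
    qPoch a q (n + 1) = qPoch a q n * (1 - a * q ^ n) :=
  Finset.prod_range_succ _ _

lemma qPoch_shift (a q : K) (n : ℕ) :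
    qPoch a q (n + 1) = (1 - a) * qPoch (a * q) q n := by
  unfold qPoch
  rw [Finset.prod_range_succ']
  rw [pow_zero, mul_one, mul_comm]
  congr 1
  refine Finset.prod_congr rfl fun i _ => ?_
  ring_nf

lemma qPoch_ne_zero {a q : K} {n : ℕ} (h : ∀ m, m < n → (1:K) - a * q ^ m ≠ 0) :
    qPoch a q n ≠ 0 :=
  Finset.prod_ne_zero_iff.mpr fun i hi => h i (Finset.mem_range.mp hi)

lemma qbinom_natCast (q : K) (L j : ℕ) (hj : j ≤ L) :
    qbinom q (L : ℤ) (j : ℤ) = qPoch q q L / (qPoch q q j * qPoch q q (L - j)) := by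
  unfold qbinom
  rw [if_pos ⟨Int.natCast_nonneg j, by exact_mod_cast hj⟩]
  have h : ((L : ℤ) - (j : ℤ)).toNat = L - j := by omega
  rw [h, Int.toNat_natCast, Int.toNat_natCast]

lemma qbinom_too_big (q : K) (L j : ℤ) (h : L < j) : qbinom q L j = 0 := by
  unfold qbinom
  rw [if_neg]
  omega

lemma qbinom_neg (q : K) (L j : ℤ) (h : j < 0) : qbinom q L j = 0 := by
  unfold qbinom
  rw [if_neg]
  omega

lemma T_two_mul (n : ℕ) : 2 * T n = n * (n + 1) :=
  Nat.mul_div_cancel' (Nat.even_mul_succ_self n).two_dvd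

lemma T_succ (n : ℕ) : T (n + 1) = T n + (n + 1) := by
  have h2 : 2 * T (n + 1) = 2 * T n + 2 * (n + 1) := by
    rw [T_two_mul, T_two_mul]; ring
  omega

lemma qbinom_E1 (q : K) (L j : ℕ) (hj : j ≤ L)
    (h1 : qPoch q q j ≠ 0) (h2 : qPoch q q (L - j) ≠ 0)
    (h3 : (1 : K) - q ^ (L + 1 - j) ≠ 0) :
    qbinom q ((L : ℤ) + 1) (j : ℤ) * (1 - q ^ (L + 1 - j)) =
      qbinom q (L : ℤ) (j : ℤ) * (1 - q ^ (L + 1)) := by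
  have e0 : ((L : ℤ) + 1) = ((L + 1 : ℕ) : ℤ) := by push_cast; ring
  rw [e0, qbinom_natCast q (L + 1) j (by omega), qbinom_natCast q L j hj]
  have e1 : L + 1 - j = (L - j) + 1 := by omega
  rw [e1, qPoch_succ, qPoch_succ]
  have e2 : (1 : K) - q * q ^ (L - j) ≠ 0 := by
    rw [e1] at h3; rw [pow_succ] at h3; rwa [mul_comm]
  field_simp
  ring

lemma qbinom_E2 (q : K) (L j : ℕ) (hj : j ≤ L)
    (h1 : qPoch q q j ≠ 0) (h2 : qPoch q q (L - j) ≠ 0)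
    (h3 : (1 : K) - q ^ (L + 1 - j) ≠ 0) :
    qbinom q (L : ℤ) ((j : ℤ) - 1) * (1 - q ^ (L + 1 - j)) =
      qbinom q (L : ℤ) (j : ℤ) * (1 - q ^ j) := by
  cases j with
  | zero => simp [qbinom_neg q L (-1) (by norm_num)]
  | succ i =>
    have e0 : ((i + 1 : ℕ) : ℤ) - 1 = (i : ℤ) := by push_cast; ring
    rw [e0, qbinom_natCast q L i (by omega), qbinom_natCast q L (i + 1) hj]
    have e1 : L - i = (L - (i + 1)) + 1 := by omega
    have e2 : L + 1 - (i + 1) = L - i := by omega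
    rw [e2, e1] at h3 ⊢
    rw [qPoch_succ q q (L - (i+1)), qPoch_succ q q i]
    have h1i : qPoch q q i ≠ 0 := by
      rw [qPoch_succ] at h1; exact fun h => h1 (by rw [h, zero_mul])
    have h1f : (1 : K) - q * q ^ i ≠ 0 := by
      rw [qPoch_succ] at h1; exact fun h => h1 (by rw [h, mul_zero])
    have h3' : (1 : K) - q * q ^ (L - (i + 1)) ≠ 0 := by
      rw [pow_succ] at h3; rwa [mul_comm]
    field_simp
    ring

end Aux

/-- Polynomial version of Lebesgue's identity coming from the q-Kummer sum. -/
theorem stmt10 {K : Type*} [Field K] (L : ℕ) (z q : K)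
    (hq : ∀ n : ℕ, 1 ≤ n → n ≤ L → q ^ n ≠ 1) :
    ∑ j ∈ Finset.range (L + 1),
        qbinom q (L : ℤ) (j : ℤ) * q ^ T j * qPoch (z ^ 2 * q) q j *
          qPoch (z ^ 2 * q ^ (2 + L + j)) q (L - j)
      = qPoch (-q) q L * qPoch (z ^ 2 * q ^ 2) (q ^ 2) L := by
  induction L with
  | zero =>
    norm_num [qbinom, qPoch, T]
  | succ L IH =>
    have hq' : ∀ n : ℕ, 1 ≤ n → n ≤ L → q ^ n ≠ 1 := fun n h1 h2 => hq n h1 (by omega)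
    have hpow : ∀ n : ℕ, 1 ≤ n → n ≤ L + 1 → (1 : K) - q ^ n ≠ 0 := fun n h1 h2 =>
      sub_ne_zero.mpr (Ne.symm (hq n h1 h2))
    have hD : ∀ n : ℕ, n ≤ L + 1 → qPoch q q n ≠ 0 := by
      intro n hn
      refine qPoch_ne_zero fun m hm => ?_
      have := hpow (m + 1) (by omega) (by omega)
      rw [pow_succ, mul_comm] at this
      exact this
    set t : ℕ → ℕ → K := fun M j =>
      qbinom q (M : ℤ) (j : ℤ) * q ^ T j * qPoch (z ^ 2 * q) q j *
        qPoch (z ^ 2 * q ^ (2 + M + j)) q (M - j) with ht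
    set G : ℕ → K := fun j =>
      if j ≤ L then
        (1 - z ^ 2 * q ^ (2 * L + 2)) * q ^ (L + 1 - j) * qbinom q (L : ℤ) ((j : ℤ) - 1) *
          q ^ T j * qPoch (z ^ 2 * q) q j * qPoch (z ^ 2 * q ^ (L + j + 2)) q (L - j)
      else if j = L + 1 then q ^ T (L + 1) * qPoch (z ^ 2 * q) q (L + 1)
      else 0 with hG
    set c : K := (1 + q ^ (L + 1)) * (1 - z ^ 2 * q ^ (2 * L + 2)) with hc
    have qPoch_zero : ∀ a : K, qPoch a q 0 = 1 := fun a => Finset.prod_range_zero _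
    have qPoch_one : ∀ a : K, qPoch a q 1 = 1 - a := by
      intro a; simp [qPoch]
    have htop0 : t L (L + 1) = 0 := by
      simp only [ht]
      rw [qbinom_too_big q (L : ℤ) ((L + 1 : ℕ) : ℤ) (by push_cast; omega)]
      simp
    have key : ∀ j ∈ Finset.range (L + 2), c * t L j - t (L + 1) j = G (j + 1) - G j := by
      intro j hj
      rw [Finset.mem_range] at hj
      rcases lt_trichotomy j L with hjL | rfl | hjL
      · -- case A : j < L
        obtain ⟨k, rfl⟩ : ∃ k, L = j + k + 1 := ⟨L - j - 1, by omega⟩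
        have hDj : qPoch q q j ≠ 0 := hD j (by omega)
        have hDLj : qPoch q q (j + k + 1 - j) ≠ 0 := by
          rw [show j + k + 1 - j = k + 1 from by omega]; exact hD (k + 1) (by omega)
        have h3 : (1 : K) - q ^ (j + k + 1 + 1 - j) ≠ 0 := by
          rw [show j + k + 1 + 1 - j = k + 2 from by omega]
          exact hpow (k + 2) (by omega) (by omega)
        have hk2 : (1 : K) - q ^ (k + 2) ≠ 0 := hpow (k + 2) (by omega) (by omega)
        have hE1 := qbinom_E1 q (j + k + 1) j (by omega) hDj hDLj h3
        have hE2 := qbinom_E2 q (j + k + 1) j (by omega) hDj hDLj h3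
        rw [show j + k + 1 + 1 - j = k + 2 from by omega] at hE1 hE2
        have hb1 : qbinom q (((j + k + 1 : ℕ) : ℤ) + 1) (j : ℤ)
            = qbinom q ((j + k + 1 : ℕ) : ℤ) (j : ℤ) * (1 - q ^ (j + k + 1 + 1)) /
              (1 - q ^ (k + 2)) := by
          rw [eq_div_iff hk2]; exact hE1
        have hb2 : qbinom q ((j + k + 1 : ℕ) : ℤ) ((j : ℤ) - 1)
            = qbinom q ((j + k + 1 : ℕ) : ℤ) (j : ℤ) * (1 - q ^ j) / (1 - q ^ (k + 2)) := by
          rw [eq_div_iff hk2]; exact hE2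
        have hP1 : qPoch (z ^ 2 * q ^ (2 + (j + k + 1) + j)) q (k + 1)
            = (1 - z ^ 2 * q ^ (2 + (j + k + 1) + j)) *
              qPoch (z ^ 2 * q ^ (2 * j + k + 4)) q k := by
          rw [qPoch_shift]
          rw [show z ^ 2 * q ^ (2 + (j + k + 1) + j) * q = z ^ 2 * q ^ (2 * j + k + 4) from by
            ring]
        have hP2 : qPoch (z ^ 2 * q ^ (2 + (j + k + 1 + 1) + j)) q (k + 2)
            = qPoch (z ^ 2 * q ^ (2 * j + k + 4)) q k *
              ((1 - z ^ 2 * q ^ (2 * j + 2 * k + 4)) * (1 - z ^ 2 * q ^ (2 * j + 2 * k + 5))) := by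
          rw [show 2 + (j + k + 1 + 1) + j = 2 * j + k + 4 from by omega]
          rw [show k + 2 = (k + 1) + 1 from rfl, qPoch_succ, qPoch_succ]
          ring
        have hP3 : qPoch (z ^ 2 * q ^ (j + k + 1 + j + 2)) q (k + 1)
            = (1 - z ^ 2 * q ^ (2 + (j + k + 1) + j)) *
              qPoch (z ^ 2 * q ^ (2 * j + k + 4)) q k := by
          rw [show j + k + 1 + j + 2 = 2 + (j + k + 1) + j from by omega]; exact hP1
        have hP4 : qPoch (z ^ 2 * q ^ (j + k + 1 + (j + 1) + 2)) q k
            = qPoch (z ^ 2 * q ^ (2 * j + k + 4)) q k := by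
          rw [show j + k + 1 + (j + 1) + 2 = 2 * j + k + 4 from by omega]
        simp only [ht, hG]
        rw [if_pos (show j ≤ j + k + 1 from by omega),
          if_pos (show j + 1 ≤ j + k + 1 from by omega)]
        rw [show j + k + 1 - j = k + 1 from by omega]
        rw [show j + k + 1 + 1 - j = k + 2 from by omega]
        rw [show j + k + 1 - (j + 1) = k from by omega]
        rw [show j + k + 1 + 1 - (j + 1) = k + 1 from by omega]
        rw [T_succ j]
        rw [qPoch_succ (z ^ 2 * q) q j]
        rw [hP1, hP2, hP3, hP4]
        push_cast at hb1 hb2 ⊢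
        rw [show (j : ℤ) + 1 - 1 = (j : ℤ) from by ring]
        rw [hb1, hb2]
        field_simp
        ring
      · -- case B : j = L
        have hDL : qPoch q q j ≠ 0 := hD j (by omega)
        have hD0 : qPoch q q (j - j) ≠ 0 := by
          rw [Nat.sub_self, qPoch_zero]; exact one_ne_zero
        have h3 : (1 : K) - q ^ (j + 1 - j) ≠ 0 := by
          rw [show j + 1 - j = 1 from by omega]
          simpa using hpow 1 le_rfl (by omega)
        have hE1 := qbinom_E1 q j j le_rfl hDL hD0 h3
        have hE2 := qbinom_E2 q j j le_rfl hDL hD0 h3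
        rw [show j + 1 - j = 1 from by omega, pow_one] at hE1 hE2
        have hq1 : (1 : K) - q ≠ 0 := by simpa using hpow 1 le_rfl (by omega)
        have hb1 : qbinom q ((j : ℤ) + 1) (j : ℤ)
            = qbinom q (j : ℤ) (j : ℤ) * (1 - q ^ (j + 1)) / (1 - q) := by
          rw [eq_div_iff hq1]; exact hE1
        have hb2 : qbinom q (j : ℤ) ((j : ℤ) - 1)
            = qbinom q (j : ℤ) (j : ℤ) * (1 - q ^ j) / (1 - q) := by
          rw [eq_div_iff hq1]; exact hE2
        simp only [ht, hG]
        rw [if_neg (show ¬ (j + 1 ≤ j) from by omega)]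
        simp only [if_pos rfl, le_refl, if_true]
        rw [show j + 1 - j = 1 from by omega]
        rw [Nat.sub_self]
        simp only [qPoch_zero, qPoch_one, mul_one]
        rw [T_succ j, pow_add]
        rw [qPoch_succ (z ^ 2 * q) q j]
        have hBB : qbinom q (j : ℤ) (j : ℤ) = 1 := by
          rw [qbinom_natCast q j j le_rfl, Nat.sub_self]
          simp only [qPoch_zero, mul_one]
          exact div_self hDL
        push_cast
        rw [hb1, hb2]
        simp only [hBB, one_mul, mul_one]
        field_simp
        ring
      · -- case C : j = L + 1
        have hjeq : j = L + 1 := by omega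
        subst hjeq
        have ht1 : t (L + 1) (L + 1) = q ^ T (L + 1) * qPoch (z ^ 2 * q) q (L + 1) := by
          simp only [ht]
          rw [qbinom_natCast q (L + 1) (L + 1) le_rfl, Nat.sub_self]
          simp only [qPoch_zero, mul_one]
          rw [div_self (hD (L + 1) le_rfl)]
          ring
        have hg2 : G (L + 1 + 1) = 0 := by
          simp only [hG]
          rw [if_neg (by omega), if_neg (by omega)]
        have hg1 : G (L + 1) = q ^ T (L + 1) * qPoch (z ^ 2 * q) q (L + 1) := by
          simp only [hG]
          rw [if_neg (by omega)]
          simp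
        rw [htop0, ht1, hg2, hg1]
        ring
    have hsum : ∑ j ∈ Finset.range (L + 2), (c * t L j - t (L + 1) j) = 0 := by
      rw [Finset.sum_congr rfl key, Finset.sum_range_sub]
      have hGtop : G (L + 2) = 0 := by
        simp only [hG]
        rw [if_neg (by omega), if_neg (by omega)]
      have hG0 : G 0 = 0 := by
        simp only [hG]
        rw [if_pos (by omega)]
        simp [qbinom_neg q (L : ℤ) (-1) (by norm_num)]
      rw [hGtop, hG0, sub_zero]
    rw [Finset.sum_sub_distrib] at hsum
    have htop : t L (L + 1) = 0 := htop0
    have h1 : ∑ j ∈ Finset.range (L + 2), t (L + 1) j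
        = c * ∑ j ∈ Finset.range (L + 1), t L j := by
      rw [← sub_eq_zero.mp hsum, Finset.sum_range_succ, htop, mul_zero, add_zero,
        ← Finset.mul_sum]
    have hgoal : ∑ j ∈ Finset.range (L + 1 + 1), t (L + 1) j
        = qPoch (-q) q (L + 1) * qPoch (z ^ 2 * q ^ 2) (q ^ 2) (L + 1) := by
      rw [show L + 1 + 1 = L + 2 from rfl, h1, IH hq']
      rw [qPoch_succ (-q) q L, qPoch_succ (z ^ 2 * q ^ 2) (q ^ 2) L, hc]
      ring
    exact hgoal
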